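/- (core of Theorem 2) For every m = (m_x, m_y, m_z) ∈ ℝ³ with ‖m‖ ≤ 1, the marginals of {Π#_{[i,j,k]}} on two parallel copies ρ_m ⊗ ρ_m reproduce the statistics of the sharp spin observables X, Y, Z on ρ_m: for every i ∈ {+1,−1}, Σ_{j,k∈{±1}} Tr[ Π#_{[i,j,k]} (ρ_m ⊗ ρ_m) ] = (1/2)(1 + i·m_x); for every j ∈ {+1,−1}, Σ_{i,k∈{±1}} Tr[ Π#_{[i,j,k]} (ρ_m ⊗ ρ_m) ] = (1/2)(1 + j·m_y); and for every k ∈ {+1,−1}, Σ_{i,j∈{±1}} Tr[ Π#_{[i,j,k]} (ρ_m ⊗ ρ_m) ] = (1/2)(1 + k·m_z). -/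

import Mathlib

open Matrix Complex
open scoped Kronecker Matrix ComplexOrder

noncomputable section

/-- Pauli matrix σ_x. -/
def σx : Matrix (Fin 2) (Fin 2) ℂ := !![0, 1; 1, 0]
/-- Pauli matrix σ_y. -/
def σy : Matrix (Fin 2) (Fin 2) ℂ := !![0, -Complex.I; Complex.I, 0]
/-- Pauli matrix σ_z. -/
def σz : Matrix (Fin 2) (Fin 2) ℂ := !![1, 0; 0, -1]

/-- The two-element set {+1, -1} of outcomes/signs. -/
def pm : Finset ℝ := {1, -1}

/-- Qubit state with Bloch vector m: ρ_m = (1/2)(I + m·σ). -/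
def rho (m : Fin 3 → ℝ) : Matrix (Fin 2) (Fin 2) ℂ :=
  (2 : ℂ)⁻¹ • ((1 : Matrix (Fin 2) (Fin 2) ℂ) + (m 0 : ℂ) • σx + (m 1 : ℂ) • σy + (m 2 : ℂ) • σz)

/-- The antiparallel-configuration effects Π↑↓_{[i,j,k]}. -/
def PiAnti (i j k : ℝ) : Matrix (Fin 2 × Fin 2) (Fin 2 × Fin 2) ℂ :=
  (16 : ℂ)⁻¹ • ((2 : ℂ) • (1 : Matrix (Fin 2 × Fin 2) (Fin 2 × Fin 2) ℂ)
    + (i : ℂ) • (σx ⊗ₖ (1 : Matrix (Fin 2) (Fin 2) ℂ) - (1 : Matrix (Fin 2) (Fin 2) ℂ) ⊗ₖ σx)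
    + (j : ℂ) • (σy ⊗ₖ (1 : Matrix (Fin 2) (Fin 2) ℂ) - (1 : Matrix (Fin 2) (Fin 2) ℂ) ⊗ₖ σy)
    + (k : ℂ) • (σz ⊗ₖ (1 : Matrix (Fin 2) (Fin 2) ℂ) - (1 : Matrix (Fin 2) (Fin 2) ℂ) ⊗ₖ σz)
    - ((i * j : ℝ) : ℂ) • (σx ⊗ₖ σy + σy ⊗ₖ σx)
    - ((j * k : ℝ) : ℂ) • (σy ⊗ₖ σz + σz ⊗ₖ σy)
    - ((k * i : ℝ) : ℂ) • (σz ⊗ₖ σx + σx ⊗ₖ σz))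

/-- The GPT effects Π#_{[i,j,k]}. -/
def PiSharp (i j k : ℝ) : Matrix (Fin 2 × Fin 2) (Fin 2 × Fin 2) ℂ :=
  (16 : ℂ)⁻¹ • ((2 : ℂ) • (1 : Matrix (Fin 2 × Fin 2) (Fin 2 × Fin 2) ℂ)
    + (i : ℂ) • (σx ⊗ₖ (1 : Matrix (Fin 2) (Fin 2) ℂ) + (1 : Matrix (Fin 2) (Fin 2) ℂ) ⊗ₖ σx)
    + (j : ℂ) • (σy ⊗ₖ (1 : Matrix (Fin 2) (Fin 2) ℂ) + (1 : Matrix (Fin 2) (Fin 2) ℂ) ⊗ₖ σy)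
    + (k : ℂ) • (σz ⊗ₖ (1 : Matrix (Fin 2) (Fin 2) ℂ) + (1 : Matrix (Fin 2) (Fin 2) ℂ) ⊗ₖ σz)
    + ((i * j : ℝ) : ℂ) • (σx ⊗ₖ σy + σy ⊗ₖ σx)
    + ((j * k : ℝ) : ℂ) • (σy ⊗ₖ σz + σz ⊗ₖ σy)
    + ((k * i : ℝ) : ℂ) • (σz ⊗ₖ σx + σx ⊗ₖ σz))

end

noncomputable section

/-- The parallel-configuration effects Π↑↑_{[i,j,k]} of Carmeli et al. -/
def PiPar (i j k : ℝ) : Matrix (Fin 2 × Fin 2) (Fin 2 × Fin 2) ℂ :=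
  (32 : ℂ)⁻¹ • ((4 : ℂ) • (1 : Matrix (Fin 2 × Fin 2) (Fin 2 × Fin 2) ℂ)
    + ((Real.sqrt 3 * i : ℝ) : ℂ) • (σx ⊗ₖ (1 : Matrix (Fin 2) (Fin 2) ℂ) + (1 : Matrix (Fin 2) (Fin 2) ℂ) ⊗ₖ σx)
    + ((Real.sqrt 3 * j : ℝ) : ℂ) • (σy ⊗ₖ (1 : Matrix (Fin 2) (Fin 2) ℂ) + (1 : Matrix (Fin 2) (Fin 2) ℂ) ⊗ₖ σy)
    + ((Real.sqrt 3 * k : ℝ) : ℂ) • (σz ⊗ₖ (1 : Matrix (Fin 2) (Fin 2) ℂ) + (1 : Matrix (Fin 2) (Fin 2) ℂ) ⊗ₖ σz)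
    + ((i * j : ℝ) : ℂ) • (σx ⊗ₖ σy + σy ⊗ₖ σx)
    + ((j * k : ℝ) : ℂ) • (σy ⊗ₖ σz + σz ⊗ₖ σy)
    + ((k * i : ℝ) : ℂ) • (σz ⊗ₖ σx + σx ⊗ₖ σz))

/-- The universal spin-flip (transformation) map F(A) = (Tr A)·I − A. -/
def Flip (A : Matrix (Fin 2) (Fin 2) ℂ) : Matrix (Fin 2) (Fin 2) ℂ :=
  A.trace • (1 : Matrix (Fin 2) (Fin 2) ℂ) - A

/-- The map id ⊗ Φ on M₂(ℂ) ⊗ M₂(ℂ), acting as A ⊗ B ↦ A ⊗ Φ(B) extended linearly. -/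
def idTensor (Φ : Matrix (Fin 2) (Fin 2) ℂ → Matrix (Fin 2) (Fin 2) ℂ)
    (M : Matrix (Fin 2 × Fin 2) (Fin 2 × Fin 2) ℂ) : Matrix (Fin 2 × Fin 2) (Fin 2 × Fin 2) ℂ :=
  Matrix.of fun p q => Φ (Matrix.of fun b d => M (p.1, b) (q.1, d)) p.2 q.2

/-- Choi matrix Σ_{k,l} E_{kl} ⊗ Λ(E_{kl}) of a linear map Λ on M₂(ℂ). -/
def Choi (Λ : Matrix (Fin 2) (Fin 2) ℂ →ₗ[ℂ] Matrix (Fin 2) (Fin 2) ℂ) :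
    Matrix (Fin 2 × Fin 2) (Fin 2 × Fin 2) ℂ :=
  ∑ k : Fin 2, ∑ l : Fin 2,
    (Matrix.single k l (1 : ℂ)) ⊗ₖ Λ (Matrix.single k l (1 : ℂ))

/-- Sign value of a Boolean outcome: true ↦ +1, false ↦ −1. -/
def sgn (b : Bool) : ℝ := if b then 1 else -1

/-- Unsharp spin effect P^a_{n̂,λ} = (1/2)(I + λ a n̂·σ). -/
def Peff (n : Fin 3 → ℝ) (lam a : ℝ) : Matrix (Fin 2) (Fin 2) ℂ :=
  (2 : ℂ)⁻¹ • ((1 : Matrix (Fin 2) (Fin 2) ℂ)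
    + ((lam * a * n 0 : ℝ) : ℂ) • σx + ((lam * a * n 1 : ℝ) : ℂ) • σy
    + ((lam * a * n 2 : ℝ) : ℂ) • σz)

/-- Computational basis vector |ab⟩ of ℂ²⊗ℂ². -/
def ket (a b : Fin 2) : Fin 2 × Fin 2 → ℂ := fun p => if p = (a, b) then 1 else 0

/-- Bell vector |φ⁺⟩. -/
def phiP : Fin 2 × Fin 2 → ℂ := ((Real.sqrt 2 : ℝ) : ℂ)⁻¹ • (ket 0 0 + ket 1 1)
/-- Bell vector |φ⁻⟩. -/
def phiM : Fin 2 × Fin 2 → ℂ := ((Real.sqrt 2 : ℝ) : ℂ)⁻¹ • (ket 0 0 - ket 1 1)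
/-- Bell vector |ψ⁺⟩. -/
def psiP : Fin 2 × Fin 2 → ℂ := ((Real.sqrt 2 : ℝ) : ℂ)⁻¹ • (ket 0 1 + ket 1 0)
/-- Bell vector |ψ⁻⟩. -/
def psiM : Fin 2 × Fin 2 → ℂ := ((Real.sqrt 2 : ℝ) : ℂ)⁻¹ • (ket 0 1 - ket 1 0)

/-- The vector |ξ_{[i,j,k]}⟩ = (1/2)(|ψ⁻⟩ − i|φ⁻⟩ + 𝐢 j|φ⁺⟩ + k|ψ⁺⟩). -/
def xi (i j k : ℝ) : Fin 2 × Fin 2 → ℂ :=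
  (2 : ℂ)⁻¹ • (psiM - (i : ℂ) • phiM + (Complex.I * (j : ℂ)) • phiP + (k : ℂ) • psiP)

end

/-!
The trace of a product of Kronecker products factorises, and `Tr (σₐ ρ_m) = mₐ`, so
`Tr[Π#_{[i,j,k]} (ρ_m ⊗ ρ_m)] = (1 + i mₓ + j m_y + k m_z + ij mₓ m_y + jk m_y m_z + ki m_z mₓ) / 8`.
Summing over two of the signs cancels every term containing one of them, and the four
remaining copies of `(1 + i mₓ) / 8` (say) add up to the sharp statistics.
-/

theorem Matrix.trace_kronecker_mul_kronecker {R n : Type*} [CommRing R] [Fintype n]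
    (A B C D : Matrix n n R) : ((A ⊗ₖ B) * (C ⊗ₖ D)).trace = (A * C).trace * (B * D).trace := by
  rw [← mul_kronecker_mul, trace_kronecker]

theorem sum_pm {M : Type*} [AddCommMonoid M] (f : ℝ → M) :
    ∑ x ∈ pm, f x = f 1 + f (-1) :=
  Finset.sum_pair (by norm_num)

section BlochComponents

variable (m : Fin 3 → ℝ)

theorem rho_eq_entries : rho m =
    !![(1 + m 2 : ℂ) / 2, (m 0 - I * m 1) / 2; (m 0 + I * m 1) / 2, (1 - m 2) / 2] := by
  ext a b
  fin_cases a <;> fin_cases b <;> simp [rho, σx, σy, σz] <;> ring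

theorem trace_rho : (rho m).trace = 1 := by
  rw [rho_eq_entries, trace_fin_two_of]
  ring

theorem trace_σx_mul_rho : (σx * rho m).trace = m 0 := by
  rw [rho_eq_entries, σx, mul_fin_two, trace_fin_two_of]
  ring

theorem trace_σy_mul_rho : (σy * rho m).trace = m 1 := by
  rw [rho_eq_entries, σy, mul_fin_two, trace_fin_two_of]
  ring_nf
  rw [I_sq]
  ring

theorem trace_σz_mul_rho : (σz * rho m).trace = m 2 := by
  rw [rho_eq_entries, σz, mul_fin_two, trace_fin_two_of]
  ring

end BlochComponents

theorem trace_piSharp_mul_rho_kronecker_rho (m : Fin 3 → ℝ) (i j k : ℝ) :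
    (PiSharp i j k * (rho m ⊗ₖ rho m)).trace
      = 8⁻¹ * (1 + i * m 0 + j * m 1 + k * m 2
        + i * j * (m 0 * m 1) + j * k * (m 1 * m 2) + k * i * (m 2 * m 0)) := by
  rw [PiSharp, ← one_kronecker_one]
  simp only [smul_mul, add_mul, trace_smul, trace_add, trace_kronecker_mul_kronecker, one_mul,
    trace_rho, trace_σx_mul_rho, trace_σy_mul_rho, trace_σz_mul_rho, smul_eq_mul]
  push_cast
  ring

theorem piSharp_marginals_general (m : Fin 3 → ℝ) :
    (∀ i ∈ pm, ∑ j ∈ pm, ∑ k ∈ pm, (PiSharp i j k * (rho m ⊗ₖ rho m)).trace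
        = ((1 / 2 * (1 + i * m 0) : ℝ) : ℂ)) ∧
    (∀ j ∈ pm, ∑ i ∈ pm, ∑ k ∈ pm, (PiSharp i j k * (rho m ⊗ₖ rho m)).trace
        = ((1 / 2 * (1 + j * m 1) : ℝ) : ℂ)) ∧
    (∀ k ∈ pm, ∑ i ∈ pm, ∑ j ∈ pm, (PiSharp i j k * (rho m ⊗ₖ rho m)).trace
        = ((1 / 2 * (1 + k * m 2) : ℝ) : ℂ)) := by
  refine ⟨fun i _ => ?_, fun j _ => ?_, fun k _ => ?_⟩ <;>
    simp only [sum_pm, trace_piSharp_mul_rho_kronecker_rho] <;> push_cast <;> ring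

/-- core of Theorem 2: marginals of Π# on ρ_m ⊗ ρ_m reproduce
sharp X, Y, Z statistics. -/
theorem piSharp_marginals (m : Fin 3 → ℝ) (hm : m 0 ^ 2 + m 1 ^ 2 + m 2 ^ 2 ≤ 1) :
    (∀ i ∈ pm, ∑ j ∈ pm, ∑ k ∈ pm, (PiSharp i j k * (rho m ⊗ₖ rho m)).trace
        = ((1 / 2 * (1 + i * m 0) : ℝ) : ℂ)) ∧
    (∀ j ∈ pm, ∑ i ∈ pm, ∑ k ∈ pm, (PiSharp i j k * (rho m ⊗ₖ rho m)).trace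
        = ((1 / 2 * (1 + j * m 1) : ℝ) : ℂ)) ∧
    (∀ k ∈ pm, ∑ i ∈ pm, ∑ j ∈ pm, (PiSharp i j k * (rho m ⊗ₖ rho m)).trace
        = ((1 / 2 * (1 + k * m 2) : ℝ) : ℂ)) :=
  piSharp_marginals_general m
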